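/- Let C be a closed polygonal curve with four vertices p_0, p_1, p_2, p_3 = p_0 in the Euclidean plane, where p_0, p_1, p_2 are not collinear (a nondegenerate triangle), and suppose the interior angle of the triangle at p_0, i.e. the angle between the vectors p_1 − p_0 and p_2 − p_0, is strictly less than π/3. Then the iterated arclength respacings of C converge to a single point: there exists q ∈ ℝ^2 such that lim_{n→∞} f^n(p_k) = q for every k = 0, 1, 2, 3. -/

import Mathlib

/-!
Respacing fixes the vertex `p 0 = p 3` and writes every new vertex as a convex combination of
old ones, so all vertices stay in the cone at `p 0` spanned by `p 1 - p 0` and `p 2 - p 0`, in which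
any two vectors make an angle with cosine at least `γ = cos ∠(p 1, p 0, p 2) > 1/2`. The new
vertices `q 1`, `q 2` lie within `L/3` of `p 0`, measured along the curve from either end, and the
narrow angle between `q 1 - p 0` and `q 2 - p 0` makes the third side `q 1 q 2` shorter than the
longer of the other two by `(γ - 1/2)` times the shorter one. So the length `L` shrinks by the
factor `1 - (γ - 1/2)/3` at every step, and all vertices converge to `p 0`.
-/

open Finset Filter

noncomputable section

/-- The length of the polygonal curve with vertices `p 0, …, p m`
(also the arclength distance from `p 0` to `p m` along the curve). -/
def polyLength {dim : ℕ} (p : ℕ → EuclideanSpace ℝ (Fin dim)) (m : ℕ) : ℝ :=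
  ∑ i ∈ Finset.range m, ‖p (i + 1) - p i‖

/-- `P` is the arclength-parameterized linear interpolation of the polygonal
curve with vertices `p 0, …, p m`:
`P ((1-t)·d_{k-1} + t·d_k) = (1-t)·p_{k-1} + t·p_k` for `t ∈ [0,1]`, `k = 1, …, m`,
where `d_k = polyLength p k` is the arclength up to vertex `k`. -/
def IsArcParam {dim : ℕ} (p : ℕ → EuclideanSpace ℝ (Fin dim)) (m : ℕ)
    (P : ℝ → EuclideanSpace ℝ (Fin dim)) : Prop :=
  ∀ k : ℕ, 1 ≤ k → k ≤ m → ∀ t : ℝ, 0 ≤ t → t ≤ 1 →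
    P ((1 - t) * polyLength p (k - 1) + t * polyLength p k)
      = (1 - t) • p (k - 1) + t • p k

/-- The polygonal curve with vertices `p 0, …, p m` is equilateral:
all consecutive interpoint distances agree. -/
def IsEquilateral {dim : ℕ} (p : ℕ → EuclideanSpace ℝ (Fin dim)) (m : ℕ) : Prop :=
  ∀ k l : ℕ, 1 ≤ k → k ≤ m → 1 ≤ l → l ≤ m →
    ‖p k - p (k - 1)‖ = ‖p l - p (l - 1)‖

/-- `q 0, …, q m` are the vertices of the arclength respacing `f(C)` of the
polygonal curve `C` with vertices `p 0, …, p m`: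
`q k = P (k·L(C)/m)` where `P` is the arclength parameterization of `C`;
by convention `f(C) := C` when `L(C) = 0`. -/
def Respaces {dim : ℕ} (m : ℕ) (p q : ℕ → EuclideanSpace ℝ (Fin dim)) : Prop :=
  (polyLength p m = 0 ∧ ∀ k ≤ m, q k = p k) ∨
  (0 < polyLength p m ∧ ∃ P : ℝ → EuclideanSpace ℝ (Fin dim), IsArcParam p m P ∧
    ∀ k ≤ m, q k = P ((k : ℝ) * polyLength p m / m))

open RealInnerProductSpace InnerProductGeometry
open scoped NNReal

section Polygon

variable {dim : ℕ} (p : ℕ → EuclideanSpace ℝ (Fin dim))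

lemma monotone_polyLength : Monotone (polyLength p) := fun _ _ h =>
  Finset.sum_le_sum_of_subset_of_nonneg (Finset.range_subset_range.2 h)
    fun _ _ _ => norm_nonneg _

lemma polyLength_succ (m : ℕ) :
    polyLength p (m + 1) = polyLength p m + ‖p (m + 1) - p m‖ :=
  Finset.sum_range_succ _ _

lemma norm_sub_zero_le_polyLength (j : ℕ) : ‖p j - p 0‖ ≤ polyLength p j := by
  induction j with
  | zero => simp [polyLength]
  | succ j ih =>
    rw [polyLength_succ]
    linarith [norm_sub_le_norm_sub_add_norm_sub (p (j + 1)) (p j) (p 0)]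

lemma norm_sub_le_polyLength_sub {j m : ℕ} (h : j ≤ m) :
    ‖p m - p j‖ ≤ polyLength p m - polyLength p j := by
  induction m, h using Nat.le_induction with
  | base => simp
  | succ m _ ih =>
    rw [polyLength_succ]
    linarith [norm_sub_le_norm_sub_add_norm_sub (p (m + 1)) (p m) (p j)]

end Polygon

lemma exists_convexCombo_eq {a b s : ℝ} (h : s ∈ Set.Icc a b) :
    ∃ t, 0 ≤ t ∧ t ≤ 1 ∧ (1 - t) * a + t * b = s := by
  obtain ⟨x, y, hx, hy, hxy, rfl⟩ := Icc_subset_segment (𝕜 := ℝ) h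
  refine ⟨y, hy, by linarith, ?_⟩
  rw [← hxy, smul_eq_mul, smul_eq_mul]
  ring

lemma exists_convexCombo_eq_of_mem_Icc {d : ℕ → ℝ} {m : ℕ} (hm : 1 ≤ m)
    {s : ℝ} (hs : s ∈ Set.Icc (d 0) (d m)) :
    ∃ j, 1 ≤ j ∧ j ≤ m ∧ ∃ t, 0 ≤ t ∧ t ≤ 1 ∧ (1 - t) * d (j - 1) + t * d j = s := by
  induction m, hm using Nat.le_induction with
  | base => exact ⟨1, le_rfl, le_rfl, exists_convexCombo_eq hs⟩
  | succ m hm ih =>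
    rcases le_or_gt s (d m) with hsm | hsm
    · obtain ⟨j, hj1, hjm, hj⟩ := ih ⟨hs.1, hsm⟩
      exact ⟨j, hj1, hjm.trans m.le_succ, hj⟩
    · exact ⟨m + 1, by omega, le_rfl, exists_convexCombo_eq ⟨hsm.le, hs.2⟩⟩

lemma norm_convexCombo_sub_le {E : Type*} [SeminormedAddCommGroup E] [NormedSpace ℝ E]
    {x y z : E} {t : ℝ} (ht0 : 0 ≤ t) (ht1 : t ≤ 1) :
    ‖(1 - t) • x + t • y - z‖ ≤ (1 - t) * ‖x - z‖ + t * ‖y - z‖ := by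
  have hcombo : (1 - t) • x + t • y - z = (1 - t) • (x - z) + t • (y - z) := by module
  rw [hcombo]
  refine (norm_add_le _ _).trans_eq ?_
  rw [norm_smul, norm_smul, Real.norm_of_nonneg (by linarith), Real.norm_of_nonneg ht0]

namespace Respaces

variable {dim m : ℕ} {p q : ℕ → EuclideanSpace ℝ (Fin dim)}

/-- In the degenerate case `L(C) = 0` all vertices coincide and any edge will do. -/
lemma exists_eq_convexCombo (hm : 1 ≤ m) (h : Respaces m p q) {k : ℕ} (hk : k ≤ m) :
    ∃ j, 1 ≤ j ∧ j ≤ m ∧ ∃ t, 0 ≤ t ∧ t ≤ 1 ∧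
      (1 - t) * polyLength p (j - 1) + t * polyLength p j = k * polyLength p m / m ∧
      q k = (1 - t) • p (j - 1) + t • p j := by
  rcases h with ⟨hL, hq⟩ | ⟨hL, P, hP, hq⟩
  · have hzero : ∀ i ≤ m, polyLength p i = 0 := fun i hi =>
      le_antisymm (hL ▸ monotone_polyLength p hi) (Finset.sum_nonneg fun _ _ => norm_nonneg _)
    rcases Nat.eq_zero_or_pos k with rfl | hk0
    · exact ⟨1, le_rfl, hm, 0, le_rfl, zero_le_one, by simp [hzero 0 (by omega)],
        by simp [hq 0 (by omega)]⟩
    · exact ⟨k, hk0, hk, 1, zero_le_one, le_rfl, by simp [hzero k hk, hL], by simp [hq k hk]⟩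
  · have hs : (k * polyLength p m / m : ℝ) ∈ Set.Icc (polyLength p 0) (polyLength p m) := by
      have hmk : (k : ℝ) ≤ m := by exact_mod_cast hk
      have hm0 : (0 : ℝ) < m := by exact_mod_cast hm
      refine ⟨by simp only [polyLength, Finset.range_zero, Finset.sum_empty]; positivity, ?_⟩
      rw [div_le_iff₀ hm0]
      nlinarith
    obtain ⟨j, hj1, hjm, t, ht0, ht1, hjt⟩ :=
      exists_convexCombo_eq_of_mem_Icc hm hs
    exact ⟨j, hj1, hjm, t, ht0, ht1, hjt, by rw [hq k hk, ← hjt, hP j hj1 hjm t ht0 ht1]⟩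

lemma norm_sub_apply_zero_le (hm : 1 ≤ m) (h : Respaces m p q) {k : ℕ} (hk : k ≤ m) :
    ‖q k - p 0‖ ≤ k * polyLength p m / m := by
  obtain ⟨j, hj1, hjm, t, ht0, ht1, hjt, hqk⟩ := h.exists_eq_convexCombo hm hk
  rw [hqk, ← hjt]
  refine (norm_convexCombo_sub_le ht0 ht1).trans ?_
  have h1 := norm_sub_zero_le_polyLength p (j - 1)
  have h2 := norm_sub_zero_le_polyLength p j
  nlinarith

lemma norm_sub_apply_self_le (hm : 1 ≤ m) (h : Respaces m p q) {k : ℕ} (hk : k ≤ m) :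
    ‖q k - p m‖ ≤ polyLength p m - k * polyLength p m / m := by
  obtain ⟨j, hj1, hjm, t, ht0, ht1, hjt, hqk⟩ := h.exists_eq_convexCombo hm hk
  rw [hqk, ← hjt]
  refine (norm_convexCombo_sub_le ht0 ht1).trans ?_
  rw [norm_sub_rev (p (j - 1)), norm_sub_rev (p j)]
  have h1 := norm_sub_le_polyLength_sub p (show j - 1 ≤ m by omega)
  have h2 := norm_sub_le_polyLength_sub p hjm
  nlinarith

lemma apply_zero (hm : 1 ≤ m) (h : Respaces m p q) : q 0 = p 0 := by
  simpa [sub_eq_zero] using h.norm_sub_apply_zero_le hm (Nat.zero_le m)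

lemma apply_self (hm : 1 ≤ m) (h : Respaces m p q) : q m = p m := by
  have hm0 : (m : ℝ) ≠ 0 := by exact_mod_cast (by omega : m ≠ 0)
  have := h.norm_sub_apply_self_le hm le_rfl
  rwa [mul_div_cancel_left₀ _ hm0, sub_self, norm_le_zero_iff, sub_eq_zero] at this

lemma sub_mem (hm : 1 ≤ m) (h : Respaces m p q) {K : Set (EuclideanSpace ℝ (Fin dim))}
    (hK : Convex ℝ K) {a : EuclideanSpace ℝ (Fin dim)} (hp : ∀ j ≤ m, p j - a ∈ K)
    {k : ℕ} (hk : k ≤ m) : q k - a ∈ K := by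
  obtain ⟨j, hj1, hjm, t, ht0, ht1, -, hqk⟩ := h.exists_eq_convexCombo hm hk
  have hcombo : q k - a = (1 - t) • (p (j - 1) - a) + t • (p j - a) := by
    rw [hqk]; module
  rw [hcombo]
  exact hK (hp _ (by omega)) (hp _ hjm) (by linarith) ht0 (by ring)

end Respaces

section Angles

variable {E : Type*} [NormedAddCommGroup E] [InnerProductSpace ℝ E]

/-- Each of `u`, `v` splits the angle `∠(x, y)` of the cone into two parts, and the triangle
inequality through `x` and through `y` bounds `2 ∠(u, v)` by the sum of all four parts. -/
lemma angle_le_angle_of_mem_span {x y u v : E} (hu0 : u ≠ 0) (hv0 : v ≠ 0)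
    (hu : u ∈ Submodule.span ℝ≥0 {x, y}) (hv : v ∈ Submodule.span ℝ≥0 {x, y}) :
    angle u v ≤ angle x y := by
  have hxy_u := angle_eq_angle_add_add_angle_add_of_mem_span hu0 hu
  have hxy_v := angle_eq_angle_add_add_angle_add_of_mem_span hv0 hv
  have hx := angle_le_angle_add_angle u x v
  have hy := angle_le_angle_add_angle u y v
  rw [angle_comm u x] at hx
  rw [angle_comm y v] at hy
  linarith

lemma cos_angle_mul_norm_mul_norm_le_inner {x y u v : E}
    (hu : u ∈ Submodule.span ℝ≥0 {x, y}) (hv : v ∈ Submodule.span ℝ≥0 {x, y}) :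
    Real.cos (angle x y) * (‖u‖ * ‖v‖) ≤ ⟪u, v⟫ := by
  rcases eq_or_ne u 0 with rfl | hu0
  · simp
  rcases eq_or_ne v 0 with rfl | hv0
  · simp
  rw [← cos_angle_mul_norm_mul_norm]
  gcongr
  exact Real.cos_le_cos_of_nonneg_of_le_pi (angle_nonneg u v) (angle_le_pi x y)
    (angle_le_angle_of_mem_span hu0 hv0 hu hv)

lemma norm_sub_le_of_inner_ge {u v : E} {γ : ℝ} (hγ : γ ≤ 1)
    (h : γ * (‖u‖ * ‖v‖) ≤ ⟪u, v⟫) (huv : ‖u‖ ≤ ‖v‖) :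
    ‖u - v‖ ≤ ‖v‖ - (γ - 1 / 2) * ‖u‖ := by
  have hu := norm_nonneg u
  have hrhs : 0 ≤ ‖v‖ - (γ - 1 / 2) * ‖u‖ := by nlinarith
  refine le_of_pow_le_pow_left₀ two_ne_zero hrhs ?_
  rw [norm_sub_sq_real]
  nlinarith [mul_nonneg hu (sub_nonneg.2 huv), sq_nonneg ((γ - 1 / 2) * ‖u‖)]

lemma norm_add_norm_sub_add_norm_le {u v : E} {γ r : ℝ} (hγ : γ ≤ 1)
    (h : γ * (‖u‖ * ‖v‖) ≤ ⟪u, v⟫) (hu : ‖u‖ ≤ r) (hv : ‖v‖ ≤ r) :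
    ‖u‖ + ‖v - u‖ + ‖v‖ ≤ (3 - (γ - 1 / 2)) * r := by
  rcases le_total ‖u‖ ‖v‖ with huv | hvu
  · have := norm_sub_le_of_inner_ge hγ h huv
    rw [norm_sub_rev] at this
    nlinarith
  · rw [real_inner_comm, mul_comm ‖u‖] at h
    have := norm_sub_le_of_inner_ge hγ h hvu
    nlinarith

end Angles

lemma Respaces.polyLength_three_le {dim : ℕ} {p q : ℕ → EuclideanSpace ℝ (Fin dim)}
    (h : Respaces 3 p q) {K : Set (EuclideanSpace ℝ (Fin dim))} (hK : Convex ℝ K) {γ : ℝ}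
    (hγ : γ ≤ 1) (hKγ : ∀ u ∈ K, ∀ v ∈ K, γ * (‖u‖ * ‖v‖) ≤ ⟪u, v⟫)
    (hclosed : p 3 = p 0) (hp : ∀ k ≤ 3, p k - p 0 ∈ K) :
    polyLength q 3 ≤ (1 - (γ - 1 / 2) / 3) * polyLength p 3 := by
  have hm : 1 ≤ 3 := by norm_num
  have hu : ‖q 1 - p 0‖ ≤ polyLength p 3 / 3 := by
    simpa using h.norm_sub_apply_zero_le hm (k := 1) (by norm_num)
  have hv : ‖q 2 - p 0‖ ≤ polyLength p 3 / 3 := by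
    have := h.norm_sub_apply_self_le hm (k := 2) (by norm_num)
    rw [hclosed] at this
    push_cast at this
    linarith
  have hperim := norm_add_norm_sub_add_norm_le hγ
    (hKγ _ (h.sub_mem hm hK hp (k := 1) (by norm_num)) _
      (h.sub_mem hm hK hp (k := 2) (by norm_num))) hu hv
  have hlen : polyLength q 3 = ‖q 1 - p 0‖ + ‖(q 2 - p 0) - (q 1 - p 0)‖ + ‖q 2 - p 0‖ := by
    simp only [polyLength, Finset.sum_range_succ, Finset.range_zero, Finset.sum_empty,
      h.apply_zero hm, show q 3 = p 0 from (h.apply_self hm).trans hclosed,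
      sub_sub_sub_cancel_right]
    rw [norm_sub_rev (p 0)]
    ring
  rw [hlen]
  linarith

lemma tendsto_of_respaces_three {dim : ℕ} {c : ℕ → ℕ → EuclideanSpace ℝ (Fin dim)}
    (hstep : ∀ n, Respaces 3 (c n) (c (n + 1))) {K : Set (EuclideanSpace ℝ (Fin dim))}
    (hK : Convex ℝ K) {γ : ℝ} (hγ : 1 / 2 < γ) (hγ1 : γ ≤ 1)
    (hKγ : ∀ u ∈ K, ∀ v ∈ K, γ * (‖u‖ * ‖v‖) ≤ ⟪u, v⟫)
    (hclosed : c 0 3 = c 0 0) (hK0 : ∀ k ≤ 3, c 0 k - c 0 0 ∈ K) {k : ℕ} (hk : k ≤ 3) :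
    Tendsto (fun n => c n k) atTop (nhds (c 0 0)) := by
  have hm : 1 ≤ 3 := by norm_num
  have h0 : ∀ n, c n 0 = c 0 0 := fun n => by
    induction n with
    | zero => rfl
    | succ n ih => rw [(hstep n).apply_zero hm, ih]
  have h3 : ∀ n, c n 3 = c 0 0 := fun n => by
    induction n with
    | zero => exact hclosed
    | succ n ih => rw [(hstep n).apply_self hm, ih]
  have hmem : ∀ n, ∀ k ≤ 3, c n k - c 0 0 ∈ K := fun n => by
    induction n with
    | zero => exact hK0
    | succ n ih => exact fun k hk => (hstep n).sub_mem hm hK ih hk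
  set r := 1 - (γ - 1 / 2) / 3 with hr
  have hr0 : 0 ≤ r := by linarith
  have hlen : ∀ n, polyLength (c n) 3 ≤ r ^ n * polyLength (c 0) 3 := fun n =>
    le_geom (u := fun n => polyLength (c n) 3) hr0 n fun n _ =>
      (hstep n).polyLength_three_le hK hγ1 hKγ ((h3 n).trans (h0 n).symm)
        (by simpa only [h0 n] using hmem n)
  have hdist : ∀ n, ‖c n k - c 0 0‖ ≤ r ^ n * polyLength (c 0) 3 := fun n =>
    calc ‖c n k - c 0 0‖ = ‖c n k - c n 0‖ := by rw [h0 n]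
      _ ≤ polyLength (c n) k := norm_sub_zero_le_polyLength _ k
      _ ≤ polyLength (c n) 3 := monotone_polyLength _ hk
      _ ≤ r ^ n * polyLength (c 0) 3 := hlen n
  have hgeom : Tendsto (fun n => r ^ n * polyLength (c 0) 3) atTop (nhds 0) := by
    simpa using (tendsto_pow_atTop_nhds_zero_of_lt_one hr0 (by linarith)).mul_const
      (polyLength (c 0) 3)
  exact tendsto_iff_norm_sub_tendsto_zero.2 (squeeze_zero (fun _ => norm_nonneg _) hdist hgeom)

theorem stmt17_general (p : ℕ → EuclideanSpace ℝ (Fin 2))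
    (hclosed : p 3 = p 0)
    (hangle : EuclideanGeometry.angle (p 1) (p 0) (p 2) < Real.pi / 3)
    (c : ℕ → ℕ → EuclideanSpace ℝ (Fin 2))
    (hc0 : ∀ k ≤ 3, c 0 k = p k)
    (hstep : ∀ n, Respaces 3 (c n) (c (n + 1))) :
    ∃ q : EuclideanSpace ℝ (Fin 2),
      ∀ k ≤ 3, Tendsto (fun n => c n k) atTop (nhds q) := by
  set K := Submodule.span ℝ≥0 {p 1 - p 0, p 2 - p 0}
  have hγ : 1 / 2 < Real.cos (angle (p 1 - p 0) (p 2 - p 0)) := by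
    rw [← Real.cos_pi_div_three]
    exact Real.cos_lt_cos_of_nonneg_of_le_pi (angle_nonneg _ _) (by linarith [Real.pi_pos]) hangle
  have hK0 : ∀ k ≤ 3, c 0 k - c 0 0 ∈ K := fun k hk => by
    interval_cases k <;> simp [K, hc0, hclosed, Submodule.mem_span_of_mem]
  refine ⟨p 0, fun k hk => ?_⟩
  simpa only [hc0 0 (by norm_num)] using
    tendsto_of_respaces_three hstep (PointedCone.convex _) hγ (Real.cos_le_one _)
      (fun u hu v hv => cos_angle_mul_norm_mul_norm_le_inner hu hv)
      (by rw [hc0 0 (by norm_num), hc0 3 le_rfl, hclosed]) hK0 hk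

/-- For a nondegenerate triangle, viewed as a closed polygonal curve, whose
angle at the starting vertex `p 0` is less than `π/3`, the iterated arclength
respacings converge to a single point. -/
theorem stmt17 (p : ℕ → EuclideanSpace ℝ (Fin 2))
    (hclosed : p 3 = p 0)
    (hncol : ¬ Collinear ℝ ({p 0, p 1, p 2} : Set (EuclideanSpace ℝ (Fin 2))))
    (hangle : EuclideanGeometry.angle (p 1) (p 0) (p 2) < Real.pi / 3)
    (c : ℕ → ℕ → EuclideanSpace ℝ (Fin 2))
    (hc0 : ∀ k ≤ 3, c 0 k = p k)
    (hstep : ∀ n, Respaces 3 (c n) (c (n + 1))) :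
    ∃ q : EuclideanSpace ℝ (Fin 2),
      ∀ k ≤ 3, Tendsto (fun n => c n k) atTop (nhds q) :=
  stmt17_general p hclosed hangle c hc0 hstep
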